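/- For the ε-dependent excited kernel e^ε(y,t) = (1/(2ε))(errfn((-y-εt)/√(4t)) - errfn((-y+εt)/√(4t))) with 0 < ε ≤ 1, there exists C > 0 independent of ε such that |e^ε_t(y,t)| ≤ C t^{-1/2}(e^{-(-y-εt)²/(Ct)} + e^{-(-y+εt)²/(Ct)}) for all y ∈ ℝ and t > 0. -/

import Mathlib

/-!
With `u = (-y - εt)/√(4t)` and `v = (-y + εt)/√(4t)` one has `∂ₜu = -v/(2t)` and
`∂ₜv = -u/(2t)`, so `∂ₜ e^ε = (u e^{-v²} - v e^{-u²}) / (4εt√π)`. The numerator vanishes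
on the diagonal `u = v`, and `v - u = ε√t`: the cancellation estimate
`|u e^{-v²} - v e^{-u²}| ≤ 11 (v - u) (e^{-u²/4} + e^{-v²/4})` (mean value theorem when
`v - u < 1`, the triangle inequality otherwise) absorbs the factor `1/ε`, and
`e^{-u²/4} = e^{-(-y-εt)²/(16t)}` gives the bound with `C = 16`.
-/

noncomputable def errfn (z : ℝ) : ℝ :=
  (Real.sqrt Real.pi)⁻¹ * ∫ ξ in Set.Iic z, Real.exp (-ξ ^ 2)

noncomputable def eKerEps (ε y t : ℝ) : ℝ :=
  (1 / (2 * ε)) * (errfn ((-y - ε * t) / Real.sqrt (4 * t))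
    - errfn ((-y + ε * t) / Real.sqrt (4 * t)))

open Real Set MeasureTheory

lemma abs_mul_exp_neg_sq_le (x : ℝ) : |x| * exp (-x ^ 2) ≤ exp (-x ^ 2 / 2) := by
  have h : |x| ≤ exp (x ^ 2 / 2) := by
    nlinarith [add_one_le_exp (x ^ 2 / 2), sq_abs x, abs_nonneg x]
  calc |x| * exp (-x ^ 2) ≤ exp (x ^ 2 / 2) * exp (-x ^ 2) := by gcongr
    _ = exp (-x ^ 2 / 2) := by rw [← exp_add]; ring_nf

lemma sq_mul_exp_neg_sq_le (x : ℝ) : x ^ 2 * exp (-x ^ 2) ≤ 2 * exp (-x ^ 2 / 2) := by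
  have h : x ^ 2 ≤ 2 * exp (x ^ 2 / 2) := by nlinarith [add_one_le_exp (x ^ 2 / 2)]
  calc x ^ 2 * exp (-x ^ 2) ≤ 2 * exp (x ^ 2 / 2) * exp (-x ^ 2) := by gcongr
    _ = 2 * exp (-x ^ 2 / 2) := by rw [mul_assoc, ← exp_add]; ring_nf

lemma exp_neg_sq_le_exp_neg_sq_div (x : ℝ) {c : ℝ} (hc : 1 ≤ c) :
    exp (-x ^ 2) ≤ exp (-x ^ 2 / c) := by
  gcongr
  rw [neg_div, neg_le_neg_iff]
  exact div_le_self (sq_nonneg x) hc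

lemma exp_half_le : exp (1 / 2 : ℝ) ≤ 5 / 3 := by
  have h : exp (1 / 2 : ℝ) * exp (1 / 2) = exp 1 := by rw [← exp_add]; norm_num
  nlinarith [exp_one_lt_d9, exp_pos (1 / 2 : ℝ)]

section GaussianCancellation

variable {u v x : ℝ}

lemma abs_mul_exp_neg_sq_le_of_abs_le {d : ℝ} (hd : 1 ≤ d) (hux : |u| ≤ |x| + d) :
    |u| * exp (-x ^ 2) ≤ 2 * d * exp (-x ^ 2 / 4) := by
  have h2 : exp (-x ^ 2 / 2) ≤ exp (-x ^ 2 / 4) := exp_le_exp.2 (by linarith [sq_nonneg x])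
  have h4 := exp_neg_sq_le_exp_neg_sq_div x (by norm_num : (1 : ℝ) ≤ 4)
  calc |u| * exp (-x ^ 2) ≤ (|x| + d) * exp (-x ^ 2) := by gcongr
    _ = |x| * exp (-x ^ 2) + d * exp (-x ^ 2) := by ring
    _ ≤ exp (-x ^ 2 / 4) + d * exp (-x ^ 2 / 4) := by
        gcongr
        exact (abs_mul_exp_neg_sq_le x).trans h2
    _ ≤ 2 * d * exp (-x ^ 2 / 4) := by nlinarith [exp_pos (-x ^ 2 / 4)]

lemma exp_neg_sq_div_two_le_of_abs_le (hux : |u| ≤ |x| + 1) :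
    exp (-x ^ 2 / 2) ≤ exp (1 / 2) * exp (-u ^ 2 / 4) := by
  rw [← exp_add]
  gcongr
  nlinarith [sq_abs x, sq_abs u, abs_nonneg u, mul_self_le_mul_self (abs_nonneg u) hux,
    sq_nonneg (|x| - 1)]

lemma abs_mul_exp_neg_sq_sub_le_of_one_le (hvu : 1 ≤ v - u) :
    |u * exp (-v ^ 2) - v * exp (-u ^ 2)| ≤
      2 * (v - u) * (exp (-u ^ 2 / 4) + exp (-v ^ 2 / 4)) := by
  have hu : |u| * exp (-v ^ 2) ≤ 2 * (v - u) * exp (-v ^ 2 / 4) :=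
    abs_mul_exp_neg_sq_le_of_abs_le hvu (by cases abs_cases u <;> cases abs_cases v <;> linarith)
  have hv : |v| * exp (-u ^ 2) ≤ 2 * (v - u) * exp (-u ^ 2 / 4) :=
    abs_mul_exp_neg_sq_le_of_abs_le hvu (by cases abs_cases u <;> cases abs_cases v <;> linarith)
  calc |u * exp (-v ^ 2) - v * exp (-u ^ 2)| ≤ |u| * exp (-v ^ 2) + |v| * exp (-u ^ 2) := by
        refine (abs_sub _ _).trans_eq ?_
        rw [abs_mul, abs_mul, abs_of_pos (exp_pos _), abs_of_pos (exp_pos _)]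
    _ ≤ _ := by linarith

lemma abs_mul_exp_neg_sq_deriv_sub_le (hux : |u| ≤ |x| + 1) :
    |u * (exp (-x ^ 2) * -(2 * x)) - exp (-u ^ 2)| ≤ 11 * exp (-u ^ 2 / 4) := by
  have hx : exp (-x ^ 2 / 2) ≤ 5 / 3 * exp (-u ^ 2 / 4) :=
    (exp_neg_sq_div_two_le_of_abs_le hux).trans (by gcongr; exact exp_half_le)
  have hu := exp_neg_sq_le_exp_neg_sq_div u (by norm_num : (1 : ℝ) ≤ 4)
  calc |u * (exp (-x ^ 2) * -(2 * x)) - exp (-u ^ 2)|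
      ≤ 2 * (|u| * |x| * exp (-x ^ 2)) + exp (-u ^ 2) := by
        refine (abs_sub _ _).trans_eq ?_
        rw [abs_of_pos (exp_pos _), abs_mul, abs_mul, abs_neg, abs_mul, abs_two,
          abs_of_pos (exp_pos _)]
        ring
    _ ≤ 2 * ((|x| + 1) * |x| * exp (-x ^ 2)) + exp (-u ^ 2) := by gcongr
    _ = 2 * (x ^ 2 * exp (-x ^ 2)) + 2 * (|x| * exp (-x ^ 2)) + exp (-u ^ 2) := by
        rw [← sq_abs x]; ring
    _ ≤ 2 * (2 * exp (-x ^ 2 / 2)) + 2 * exp (-x ^ 2 / 2) + exp (-u ^ 2 / 4) := by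
        linarith [sq_mul_exp_neg_sq_le x, abs_mul_exp_neg_sq_le x]
    _ ≤ 11 * exp (-u ^ 2 / 4) := by linarith

lemma abs_mul_exp_neg_sq_sub_le_of_lt_one (huv : u ≤ v) (hvu : v - u < 1) :
    |u * exp (-v ^ 2) - v * exp (-u ^ 2)| ≤ 11 * (v - u) * exp (-u ^ 2 / 4) := by
  have hderiv : ∀ x ∈ Icc u v, HasDerivWithinAt (fun x ↦ u * exp (-x ^ 2) - x * exp (-u ^ 2))
      (u * (exp (-x ^ 2) * -(2 * x)) - exp (-u ^ 2)) (Icc u v) x := by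
    intro x _
    have hexp : HasDerivAt (fun x : ℝ ↦ exp (-x ^ 2)) (exp (-x ^ 2) * -(2 * x)) x := by
      simpa using ((hasDerivAt_pow 2 x).neg).exp
    exact ((hexp.const_mul u).fun_sub (hasDerivAt_mul_const _)).hasDerivWithinAt
  have hbound : ∀ x ∈ Ico u v,
      ‖u * (exp (-x ^ 2) * -(2 * x)) - exp (-u ^ 2)‖ ≤ 11 * exp (-u ^ 2 / 4) := fun x hx ↦
    abs_mul_exp_neg_sq_deriv_sub_le
      (by cases abs_cases u <;> cases abs_cases x <;> linarith [hx.1, hx.2])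
  have h := norm_image_sub_le_of_norm_deriv_le_segment' hderiv hbound v (right_mem_Icc.2 huv)
  simpa [Real.norm_eq_abs, mul_comm, mul_left_comm, mul_assoc] using h

lemma abs_mul_exp_neg_sq_sub_le (huv : u ≤ v) :
    |u * exp (-v ^ 2) - v * exp (-u ^ 2)| ≤
      11 * (v - u) * (exp (-u ^ 2 / 4) + exp (-v ^ 2 / 4)) := by
  have hu : 0 ≤ (v - u) * exp (-u ^ 2 / 4) := mul_nonneg (sub_nonneg.2 huv) (exp_pos _).le
  have hv : 0 ≤ (v - u) * exp (-v ^ 2 / 4) := mul_nonneg (sub_nonneg.2 huv) (exp_pos _).le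
  rcases le_or_gt 1 (v - u) with hfar | hnear
  · linarith [abs_mul_exp_neg_sq_sub_le_of_one_le hfar]
  · linarith [abs_mul_exp_neg_sq_sub_le_of_lt_one huv hnear]

end GaussianCancellation

lemma hasDerivAt_errfn (z : ℝ) : HasDerivAt errfn ((√π)⁻¹ * exp (-z ^ 2)) z := by
  have hint : Integrable (fun ξ : ℝ ↦ exp (-ξ ^ 2)) := by
    simpa using integrable_exp_neg_mul_sq one_pos
  have hcont : Continuous (fun ξ : ℝ ↦ exp (-ξ ^ 2)) := by fun_prop
  have herrfn : errfn = fun w ↦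
      (√π)⁻¹ * ((∫ ξ in Iic 0, exp (-ξ ^ 2)) + ∫ ξ in (0 : ℝ)..w, exp (-ξ ^ 2)) := by
    funext w
    rw [errfn, ← intervalIntegral.integral_Iic_sub_Iic hint.integrableOn hint.integrableOn]
    ring
  rw [herrfn]
  exact ((intervalIntegral.integral_hasDerivAt_right hint.intervalIntegrable
    (hcont.stronglyMeasurableAtFilter _ _) hcont.continuousAt).const_add _).const_mul _

lemma sqrt_four_mul (t : ℝ) : √(4 * t) = 2 * √t := by
  rw [sqrt_mul (by norm_num), show (4 : ℝ) = 2 ^ 2 by norm_num, sqrt_sq (by norm_num)]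

lemma hasDerivAt_div_sqrt_four_mul (a b : ℝ) {t : ℝ} (ht : 0 < t) :
    HasDerivAt (fun s ↦ (a + b * s) / √(4 * s)) ((b * t - a) / √(4 * t) / (2 * t)) t := by
  have hsqrt : HasDerivAt (fun s ↦ √(4 * s)) (1 / (2 * √(4 * t)) * (4 * 1)) t :=
    (hasDerivAt_sqrt (by positivity)).comp t ((hasDerivAt_id t).const_mul 4)
  have hnum : HasDerivAt (fun s ↦ a + b * s) (b * 1) t :=
    ((hasDerivAt_id t).const_mul b).const_add a
  refine (hnum.div hsqrt (by positivity)).congr_deriv ?_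
  have : 0 < √t := sqrt_pos.2 ht
  rw [sq_sqrt (by positivity), sqrt_four_mul]
  field_simp
  rw [sq_sqrt ht.le]
  ring

lemma hasDerivAt_eKerEps {ε : ℝ} (y : ℝ) {t : ℝ} (hε : ε ≠ 0) (ht : 0 < t) :
    HasDerivAt (fun s ↦ eKerEps ε y s)
      (((-y - ε * t) / √(4 * t) * exp (-((-y + ε * t) / √(4 * t)) ^ 2)
        - (-y + ε * t) / √(4 * t) * exp (-((-y - ε * t) / √(4 * t)) ^ 2))
        / (4 * ε * t * √π)) t := by
  have hu := hasDerivAt_div_sqrt_four_mul (-y) (-ε) ht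
  have hv := hasDerivAt_div_sqrt_four_mul (-y) ε ht
  simp only [neg_mul, ← sub_eq_add_neg] at hu
  have h := (((hasDerivAt_errfn _).comp t hu).sub ((hasDerivAt_errfn _).comp t hv)).const_mul
    (1 / (2 * ε))
  refine h.congr_deriv ?_
  have : 0 < √(4 * t) := by positivity
  field_simp
  ring

/-- Uniform (in `0 < ε ≤ 1`) Gaussian bound on the time derivative of the
`ε`-dependent excited kernel `e^ε(y,t)`. -/
theorem eKerEps_deriv_t_bound :
    ∃ C : ℝ, 0 < C ∧ ∀ ε : ℝ, 0 < ε → ε ≤ 1 → ∀ (y t : ℝ), 0 < t →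
      |deriv (fun s : ℝ => eKerEps ε y s) t|
        ≤ C * t ^ (-(1 / 2 : ℝ)) *
            (Real.exp (-(-y - ε * t) ^ 2 / (C * t))
              + Real.exp (-(-y + ε * t) ^ 2 / (C * t))) := by
  refine ⟨16, by norm_num, fun ε hε _ y t ht ↦ ?_⟩
  rw [(hasDerivAt_eKerEps y hε.ne' ht).deriv]
  set u := (-y - ε * t) / √(4 * t)
  set v := (-y + ε * t) / √(4 * t)
  have hsqrt : 0 < √t := sqrt_pos.2 ht
  have hπ : 1 ≤ √π := one_le_sqrt.2 (by linarith [pi_gt_three])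
  have huv : u ≤ v := div_le_div_of_nonneg_right (by linarith [mul_pos hε ht]) (sqrt_nonneg _)
  have hvu : v - u = ε * √t := by
    simp only [u, v, sqrt_four_mul]
    field_simp
    rw [sq_sqrt ht.le]
    ring
  have hexp (w : ℝ) : exp (-(w / √(4 * t)) ^ 2 / 4) = exp (-w ^ 2 / (16 * t)) := by
    rw [div_pow, sq_sqrt (by positivity)]
    ring_nf
  rw [abs_div, abs_of_pos (by positivity : 0 < 4 * ε * t * √π), rpow_neg ht.le, ← sqrt_eq_rpow,
    ← hexp, ← hexp]
  calc |u * exp (-v ^ 2) - v * exp (-u ^ 2)| / (4 * ε * t * √π)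
      ≤ 11 * (ε * √t) * (exp (-u ^ 2 / 4) + exp (-v ^ 2 / 4)) / (4 * ε * t * √π) := by
        gcongr
        exact hvu ▸ abs_mul_exp_neg_sq_sub_le huv
    _ = 11 / (4 * √π) * (√t)⁻¹ * (exp (-u ^ 2 / 4) + exp (-v ^ 2 / 4)) := by
        field_simp
        rw [sq_sqrt ht.le]
    _ ≤ 16 * (√t)⁻¹ * (exp (-u ^ 2 / 4) + exp (-v ^ 2 / 4)) := by
        gcongr
        rw [div_le_iff₀ (by positivity)]
        linarith
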